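/- Let Γ₁, Γ₁ᵉ, Γ₃ : ℝ → ℝ² be differentiable curves, let X and Xᵉ be the associated transfinite interpolation maps, and let ΔΓ := Γ₁ᵉ − Γ₁. Define the Jacobians J(ξ,η) := det(∂_ξX(ξ,η), ∂_ηX(ξ,η)) and J_e(ξ,η) := det(∂_ξXᵉ(ξ,η), ∂_ηXᵉ(ξ,η)). Then for all (ξ,η) ∈ ℝ², J_e(ξ,η) = J(ξ,η) + det(ΔΓ(ξ), ∂_ξX(ξ,η)) + (1−η)·( det(ΔΓ′(ξ), ∂_ηX(ξ,η)) − det(ΔΓ′(ξ), ΔΓ(ξ)) ), where ΔΓ′ is the derivative of ΔΓ. In particular, the Jacobian error ε := J_e − J is, to lowest order, bilinear in the boundary-curve error ΔΓ and its derivative ΔΓ′. -/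

import Mathlib

/-!
Replacing the bottom curve `Γ₁` by `Γ₁ + ΔΓ` shifts `∂_ξX` by `(1 - η) ΔΓ'` and `∂_ηX = Γ₃ - Γ₁`
by `-ΔΓ`; the identity is then the bilinearity and antisymmetry of `det`.
-/

noncomputable section

/-- Planar determinant `det(u,v) = u₁v₂ − u₂v₁`. -/
def det2 (u v : ℝ × ℝ) : ℝ := u.1 * v.2 - u.2 * v.1

/-- Transfinite interpolation map of a bottom curve `Γbot` and top curve `Γtop`. -/
def tfi (Γbot Γtop : ℝ → ℝ × ℝ) (ξ η : ℝ) : ℝ × ℝ :=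
  (1 - η) • Γbot ξ + η • Γtop ξ

/-- Partial derivative in the first (ξ) reference coordinate. -/
def pdXi (X : ℝ → ℝ → ℝ × ℝ) (ξ η : ℝ) : ℝ × ℝ := deriv (fun s => X s η) ξ

/-- Partial derivative in the second (η) reference coordinate. -/
def pdEta (X : ℝ → ℝ → ℝ × ℝ) (ξ η : ℝ) : ℝ × ℝ := deriv (fun s => X ξ s) η

/-- Jacobian `J = det(∂_ξX, ∂_ηX)` of a two-dimensional mapping. -/
def jac (X : ℝ → ℝ → ℝ × ℝ) (ξ η : ℝ) : ℝ := det2 (pdXi X ξ η) (pdEta X ξ η)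

lemma det2_add_smul_sub (a b d d' : ℝ × ℝ) (c : ℝ) :
    det2 (a + c • d') (b - d) = det2 a b + det2 d a + c * (det2 d' b - det2 d' d) := by
  simp only [det2, Prod.fst_add, Prod.snd_add, Prod.fst_sub, Prod.snd_sub, Prod.smul_fst,
    Prod.smul_snd, smul_eq_mul]
  ring

lemma pdXi_tfi {Γb Γt : ℝ → ℝ × ℝ} {ξ : ℝ} (hb : DifferentiableAt ℝ Γb ξ)
    (ht : DifferentiableAt ℝ Γt ξ) (η : ℝ) :
    pdXi (tfi Γb Γt) ξ η = (1 - η) • deriv Γb ξ + η • deriv Γt ξ :=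
  ((hb.hasDerivAt.const_smul (1 - η)).add (ht.hasDerivAt.const_smul η)).deriv

lemma pdEta_tfi (Γb Γt : ℝ → ℝ × ℝ) (ξ η : ℝ) :
    pdEta (tfi Γb Γt) ξ η = Γt ξ - Γb ξ := by
  have h : HasDerivAt (fun s : ℝ => (1 - s) • Γb ξ + s • Γt ξ)
      ((-1 : ℝ) • Γb ξ + (1 : ℝ) • Γt ξ) η :=
    (((hasDerivAt_id η).const_sub 1).smul_const (Γb ξ)).add
      ((hasDerivAt_id η).smul_const (Γt ξ))
  simp only [pdEta, tfi]
  rw [h.deriv]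
  module

/-- For the transfinite interpolation maps `X` (with bottom curve `Γ₁`)
and `Xᵉ` (with bottom curve `Γ₁ᵉ`), the erroneous Jacobian satisfies
`J_e = J + det(ΔΓ, ∂_ξX) + (1−η)(det(ΔΓ′, ∂_ηX) − det(ΔΓ′, ΔΓ))`, where `ΔΓ = Γ₁ᵉ − Γ₁`;
in particular the Jacobian error `ε = J_e − J` is, to lowest order, bilinear in `ΔΓ`
and `ΔΓ′`. -/
theorem jacobian_error_bilinear (Γ₁ Γ₁e Γ₃ : ℝ → ℝ × ℝ)
    (h₁ : Differentiable ℝ Γ₁) (h₁e : Differentiable ℝ Γ₁e) (h₃ : Differentiable ℝ Γ₃) :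
    ∀ ξ η : ℝ,
      jac (tfi Γ₁e Γ₃) ξ η =
        jac (tfi Γ₁ Γ₃) ξ η
          + det2 (Γ₁e ξ - Γ₁ ξ) (pdXi (tfi Γ₁ Γ₃) ξ η)
          + (1 - η) *
              (det2 (deriv (fun s => Γ₁e s - Γ₁ s) ξ) (pdEta (tfi Γ₁ Γ₃) ξ η)
                - det2 (deriv (fun s => Γ₁e s - Γ₁ s) ξ) (Γ₁e ξ - Γ₁ ξ)) := by
  intro ξ η
  have hξ : pdXi (tfi Γ₁e Γ₃) ξ η
      = pdXi (tfi Γ₁ Γ₃) ξ η + (1 - η) • deriv (fun s => Γ₁e s - Γ₁ s) ξ := by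
    rw [pdXi_tfi (h₁e ξ) (h₃ ξ), pdXi_tfi (h₁ ξ) (h₃ ξ), deriv_fun_sub (h₁e ξ) (h₁ ξ)]
    module
  have hη : pdEta (tfi Γ₁e Γ₃) ξ η = pdEta (tfi Γ₁ Γ₃) ξ η - (Γ₁e ξ - Γ₁ ξ) := by
    rw [pdEta_tfi, pdEta_tfi]
    abel
  rw [jac, hξ, hη, det2_add_smul_sub, jac]

end
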